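/- arXiv:1412.1844 — 5 statements merged into one kernel-verified Lean document; each statement's English description precedes it below -/
import Mathlib

section
/- The ISTA step x⁺ = argmin_y [f(x) + (y-x)ᵀ∇f(x) + (1/(2α))||y-x||² + τ||y||₁] with stepsize 0 < α ≤ 1/L satisfies the Q-linear decrease F(x⁺) - F(x*) ≤ (1 - λα)(F(x) - F(x*)), where x* is the minimizer of F. -/
/-!
The model `m` majorizes `F` because `α ≤ 1/L`, so `F x⁺ ≤ m x⁺ ≤ m y` for every `y`.
Taking `y = x + λα (z - x)`, strong convexity of `f` bounds the linear term of `m y`, and its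
quadratic term `(λα)²/(2α) ‖z - x‖² = λα · λ/2 ‖z - x‖²` is exactly what strong convexity gives
back, while convexity of `‖·‖₁` handles the regularizer; hence `F x⁺ ≤ (1 - λα) F x + λα F z`
for every `z`, in particular for `z = x*`.
-/

open Matrix

variable {ι : Type*} [Fintype ι] {A : Matrix ι ι ℝ}

theorem Matrix.IsSymm.dotProduct_mulVec_comm (hA : A.IsSymm) (u v : ι → ℝ) :
    u ⬝ᵥ A *ᵥ v = v ⬝ᵥ A *ᵥ u := by
  rw [dotProduct_mulVec, ← mulVec_transpose, hA.eq, dotProduct_comm]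

namespace Ista

theorem lam_le_of_dotProduct_bounds [Nonempty ι] {lam L : ℝ}
    (hAlow : ∀ y : ι → ℝ, lam * (y ⬝ᵥ y) ≤ y ⬝ᵥ A *ᵥ y)
    (hAup : ∀ y : ι → ℝ, y ⬝ᵥ A *ᵥ y ≤ L * (y ⬝ᵥ y)) : lam ≤ L := by
  classical
  obtain ⟨i⟩ := ‹Nonempty ι›
  have he : Pi.single i (1 : ℝ) ⬝ᵥ Pi.single i 1 = 1 := by simp
  simpa [he] using (hAlow (Pi.single i 1)).trans (hAup _)

theorem sum_abs_add_smul_sub_le (x z : ι → ℝ) {t : ℝ} (ht0 : 0 ≤ t) (ht1 : t ≤ 1) :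
    ∑ i, |(x + t • (z - x)) i| ≤ (1 - t) * ∑ i, |x i| + t * ∑ i, |z i| := by
  rw [Finset.mul_sum, Finset.mul_sum, ← Finset.sum_add_distrib]
  refine Finset.sum_le_sum fun i _ => ?_
  calc |(x + t • (z - x)) i| = |(1 - t) * x i + t * z i| := by
        simp only [Pi.add_apply, Pi.smul_apply, Pi.sub_apply, smul_eq_mul]; ring_nf
    _ ≤ |(1 - t) * x i| + |t * z i| := abs_add_le _ _
    _ = (1 - t) * |x i| + t * |z i| := by
        rw [abs_mul, abs_mul, abs_of_nonneg (sub_nonneg.2 ht1), abs_of_nonneg ht0]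

variable (A) (b : ι → ℝ) (τ α : ℝ)

noncomputable section

def quadratic (y : ι → ℝ) : ℝ := 1 / 2 * (y ⬝ᵥ A *ᵥ y) - b ⬝ᵥ y

def objective (y : ι → ℝ) : ℝ := quadratic A b y + τ * ∑ i, |y i|

def istaModel (x y : ι → ℝ) : ℝ :=
  quadratic A b x + (y - x) ⬝ᵥ (A *ᵥ x - b) + 1 / (2 * α) * ((y - x) ⬝ᵥ (y - x))
    + τ * ∑ i, |y i|

end

variable {A b τ α}

theorem quadratic_eq_add (hA : A.IsSymm) (x y : ι → ℝ) :
    quadratic A b y = quadratic A b x + (y - x) ⬝ᵥ (A *ᵥ x - b)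
      + 1 / 2 * ((y - x) ⬝ᵥ A *ᵥ (y - x)) := by
  have := hA.dotProduct_mulVec_comm x y
  simp only [quadratic, mulVec_sub, dotProduct_sub, sub_dotProduct]
  linarith [dotProduct_comm b y, dotProduct_comm b x]

theorem objective_le_istaModel (hA : A.IsSymm) {L : ℝ}
    (hAup : ∀ y : ι → ℝ, y ⬝ᵥ A *ᵥ y ≤ L * (y ⬝ᵥ y)) (hα0 : 0 < α) (hαL : α * L ≤ 1)
    (x y : ι → ℝ) : objective A b τ y ≤ istaModel A b τ α x y := by
  have hsq : 0 ≤ (y - x) ⬝ᵥ (y - x) := Finset.sum_nonneg fun i _ => mul_self_nonneg _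
  have hLα : L ≤ 1 / α := by rw [le_div_iff₀ hα0]; linarith
  have hcurv : (y - x) ⬝ᵥ A *ᵥ (y - x) ≤ 1 / α * ((y - x) ⬝ᵥ (y - x)) :=
    (hAup _).trans (mul_le_mul_of_nonneg_right hLα hsq)
  have hhalf : 1 / (2 * α) * ((y - x) ⬝ᵥ (y - x)) = 1 / 2 * (1 / α * ((y - x) ⬝ᵥ (y - x))) := by
    ring
  rw [objective, istaModel, quadratic_eq_add hA x y]
  linarith

theorem istaModel_add_smul_sub_le (hA : A.IsSymm) {lam : ℝ} (hlam : 0 ≤ lam)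
    (hAlow : ∀ y : ι → ℝ, lam * (y ⬝ᵥ y) ≤ y ⬝ᵥ A *ᵥ y) (hτ : 0 ≤ τ) (hα0 : 0 < α)
    (hlamα : lam * α ≤ 1) (x z : ι → ℝ) :
    istaModel A b τ α x (x + (lam * α) • (z - x))
      ≤ (1 - lam * α) * objective A b τ x + lam * α * objective A b τ z := by
  set t := lam * α
  have ht0 : 0 ≤ t := mul_nonneg hlam hα0.le
  have hstrong : (z - x) ⬝ᵥ (A *ᵥ x - b) + lam / 2 * ((z - x) ⬝ᵥ (z - x))
      ≤ quadratic A b z - quadratic A b x := by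
    linarith [quadratic_eq_add (b := b) hA x z, hAlow (z - x)]
  have hcoef : 1 / (2 * α) * t * t = t * (lam / 2) := by simp only [t]; field_simp
  have hl1 := mul_le_mul_of_nonneg_left (sum_abs_add_smul_sub_le x z ht0 hlamα) hτ
  have hmodel : istaModel A b τ α x (x + t • (z - x)) = quadratic A b x
      + t * ((z - x) ⬝ᵥ (A *ᵥ x - b) + lam / 2 * ((z - x) ⬝ᵥ (z - x)))
      + τ * ∑ i, |(x + t • (z - x)) i| := by
    rw [istaModel, add_sub_cancel_left, smul_dotProduct, dotProduct_smul, smul_dotProduct,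
      smul_eq_mul, smul_eq_mul, smul_eq_mul]
    linear_combination ((z - x) ⬝ᵥ (z - x)) * hcoef
  rw [hmodel, objective, objective]
  linarith [mul_le_mul_of_nonneg_left hstrong ht0]

end Ista

open Ista

open Matrix in
theorem ista_step_linear_decrease_general
    (n : ℕ) (A : Matrix (Fin n) (Fin n) ℝ) (hA : A.IsSymm)
    (lam L : ℝ) (hlam : 0 < lam)
    (hAlow : ∀ y : Fin n → ℝ, lam * (y ⬝ᵥ y) ≤ y ⬝ᵥ A.mulVec y)
    (hAup : ∀ y : Fin n → ℝ, y ⬝ᵥ A.mulVec y ≤ L * (y ⬝ᵥ y))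
    (b : Fin n → ℝ) (τ : ℝ) (hτ : 0 ≤ τ)
    (f : (Fin n → ℝ) → ℝ) (hf : ∀ y, f y = 1 / 2 * (y ⬝ᵥ A.mulVec y) - b ⬝ᵥ y)
    (F : (Fin n → ℝ) → ℝ) (hF : ∀ y, F y = f y + τ * ∑ i, |y i|)
    (xstar : Fin n → ℝ)
    (x : Fin n → ℝ) (α : ℝ) (hα0 : 0 < α) (hαL : α ≤ 1 / L)
    (m : (Fin n → ℝ) → ℝ)
    (hm : ∀ y, m y = f x + (y - x) ⬝ᵥ (A.mulVec x - b)
        + 1 / (2 * α) * ((y - x) ⬝ᵥ (y - x)) + τ * ∑ i, |y i|)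
    (xp : Fin n → ℝ) (hxp : ∀ y, m xp ≤ m y) :
    F xp - F xstar ≤ (1 - lam * α) * (F x - F xstar) := by
  obtain rfl : f = quadratic A b := funext hf
  obtain rfl : F = objective A b τ := funext hF
  obtain rfl : m = istaModel A b τ α x := funext hm
  rcases isEmpty_or_nonempty (Fin n) with hempty | hnonempty
  · simp [Subsingleton.elim xp x, Subsingleton.elim xstar x]
  have hL : 0 < L := one_div_pos.mp (hα0.trans_le hαL)
  have hαL' : α * L ≤ 1 := (le_div_iff₀ hL).mp hαL
  have hlamα : lam * α ≤ 1 := by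
    linarith [mul_le_mul_of_nonneg_right (lam_le_of_dotProduct_bounds hAlow hAup) hα0.le]
  have hdecrease := (objective_le_istaModel (τ := τ) (b := b) hA hAup hα0 hαL' x xp).trans
    ((hxp _).trans (istaModel_add_smul_sub_le hA hlam.le hAlow hτ hα0 hlamα x xstar))
  linarith

open Matrix in
theorem ista_step_linear_decrease
    (n : ℕ) (A : Matrix (Fin n) (Fin n) ℝ) (hA : A.IsSymm)
    (lam L : ℝ) (hlam : 0 < lam)
    (hAlow : ∀ y : Fin n → ℝ, lam * (y ⬝ᵥ y) ≤ y ⬝ᵥ A.mulVec y)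
    (hAup : ∀ y : Fin n → ℝ, y ⬝ᵥ A.mulVec y ≤ L * (y ⬝ᵥ y))
    (b : Fin n → ℝ) (τ : ℝ) (hτ : 0 ≤ τ)
    (f : (Fin n → ℝ) → ℝ) (hf : ∀ y, f y = 1 / 2 * (y ⬝ᵥ A.mulVec y) - b ⬝ᵥ y)
    (F : (Fin n → ℝ) → ℝ) (hF : ∀ y, F y = f y + τ * ∑ i, |y i|)
    (xstar : Fin n → ℝ) (hxstar : ∀ y, F xstar ≤ F y)
    (x : Fin n → ℝ) (α : ℝ) (hα0 : 0 < α) (hαL : α ≤ 1 / L)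
    (m : (Fin n → ℝ) → ℝ)
    (hm : ∀ y, m y = f x + (y - x) ⬝ᵥ (A.mulVec x - b)
        + 1 / (2 * α) * ((y - x) ⬝ᵥ (y - x)) + τ * ∑ i, |y i|)
    (xp : Fin n → ℝ) (hxp : ∀ y, m xp ≤ m y) :
    F xp - F xstar ≤ (1 - lam * α) * (F x - F xstar) :=
  ista_step_linear_decrease_general n A hA lam L hlam hAlow hAup b τ hτ f hf F hF xstar x α hα0 hαL
    m hm xp hxp
end

section
/- Let m(y) = f(x) + (y-x)ᵀg + (1/(2α))||y-x||² + τ||y||₁ be the ISTA model at x, let x⁺ = x - αψ(x) be the subspace ISTA step, and let x_full = x - αω(x) - αψ(x) be the full ISTA step. Then m(x_full) = m(x⁺) - (α/2)||ω(x)||². -/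
/-!
The ISTA model is separable: up to the constant `f x` it is a sum over coordinates of
`(t - xᵢ) gᵢ + (t - xᵢ)² / (2α) + τ |t|`, so the identity can be checked one coordinate at a time.
Where `xᵢ ≠ 0` we have `ωᵢ = 0` and both steps agree. Where `xᵢ = 0` we have `ψᵢ = 0` and
`ωᵢ` is the soft-thresholded gradient entry, which satisfies `ωᵢ gᵢ = ωᵢ² + τ |ωᵢ|`; moving
from `0` to `-α ωᵢ` then changes the coordinate term by exactly `-(α/2) ωᵢ²`.
-/

open Finset Matrix

noncomputable def softThreshold (τ t : ℝ) : ℝ :=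
  if |t| ≤ τ then 0 else t - τ * Real.sign t

theorem softThreshold_mul_eq (τ t : ℝ) :
    softThreshold τ t * t = softThreshold τ t * softThreshold τ t + τ * |softThreshold τ t| := by
  unfold softThreshold
  split_ifs with ht
  · simp
  rcases lt_trichotomy t 0 with hneg | rfl | hpos
  · rw [abs_of_neg hneg] at ht
    rw [Real.sign_of_neg hneg, abs_of_neg (by linarith)]
    ring
  · simp
  · rw [abs_of_pos hpos] at ht
    rw [Real.sign_of_pos hpos, abs_of_pos (by linarith)]
    ring

noncomputable def istaModelTerm (α τ x g t : ℝ) : ℝ :=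
  (t - x) * g + 1 / (2 * α) * ((t - x) * (t - x)) + τ * |t|

theorem istaModelTerm_full_step {α τ x g ω ψ : ℝ} (hα : 0 < α)
    (hω : ω = if x ≠ 0 then 0 else softThreshold τ g) (hψ : x = 0 → ψ = 0) :
    istaModelTerm α τ x g (x - α * ω - α * ψ) =
      istaModelTerm α τ x g (x - α * ψ) - α / 2 * (ω * ω) := by
  by_cases hx : x = 0
  · have hω' : ω * g = ω * ω + τ * |ω| := by
      rw [hω, if_neg (not_not.mpr hx)]
      exact softThreshold_mul_eq τ g
    simp only [istaModelTerm, hx, hψ hx, mul_zero, sub_zero, zero_sub, abs_neg, abs_zero,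
      abs_mul, abs_of_pos hα]
    field_simp
    linear_combination (-2 * α) * hω'
  · simp [hω, hx]

section

variable {ι : Type*} [Fintype ι]

noncomputable def istaModel (c α τ : ℝ) (x g y : ι → ℝ) : ℝ :=
  c + ∑ i, istaModelTerm α τ (x i) (g i) (y i)

theorem istaModel_eq (c α τ : ℝ) (x g y : ι → ℝ) :
    istaModel c α τ x g y =
      c + (y - x) ⬝ᵥ g + 1 / (2 * α) * ((y - x) ⬝ᵥ (y - x)) + τ * ∑ i, |y i| := by
  simp only [istaModel, istaModelTerm, dotProduct, Pi.sub_apply, sum_add_distrib, mul_sum,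
    add_assoc]

theorem istaModel_full_step {c α τ : ℝ} {x g ω ψ : ι → ℝ} (hα : 0 < α)
    (hω : ∀ i, ω i = if x i ≠ 0 then 0 else softThreshold τ (g i))
    (hψ : ∀ i, x i = 0 → ψ i = 0) :
    istaModel c α τ x g (x - α • ω - α • ψ) =
      istaModel c α τ x g (x - α • ψ) - α / 2 * (ω ⬝ᵥ ω) := by
  simp only [istaModel, Pi.sub_apply, Pi.smul_apply, smul_eq_mul,
    istaModelTerm_full_step hα (hω _) (hψ _), sum_sub_distrib, dotProduct, mul_sum]
  ring

end

open Matrix in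
theorem full_vs_subspace_ista_model_general
    (n : ℕ)
    (τ α : ℝ) (hα : 0 < α)
    (x : Fin n → ℝ)
    (f : (Fin n → ℝ) → ℝ)
    (g : Fin n → ℝ)
    (omega psi : Fin n → ℝ)
    (homega : ∀ i, omega i =
      if x i ≠ 0 then 0
      else if |g i| ≤ τ then 0
      else g i - τ * Real.sign (g i))
    (hpsi : ∀ i, psi i =
      if x i = 0 then 0
      else 1 / α * (x i - max (|x i - α * g i| - α * τ) 0 * Real.sign (x i - α * g i)))
    (m : (Fin n → ℝ) → ℝ)
    (hm : ∀ y, m y = f x + (y - x) ⬝ᵥ g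
        + 1 / (2 * α) * ((y - x) ⬝ᵥ (y - x)) + τ * ∑ i, |y i|) :
    m (x - α • omega - α • psi) = m (x - α • psi) - α / 2 * (omega ⬝ᵥ omega) := by
  have hm_model : m = istaModel (f x) α τ x g :=
    funext fun y => (hm y).trans (istaModel_eq _ _ _ _ _ _).symm
  rw [hm_model]
  exact istaModel_full_step hα homega fun i hx => by rw [hpsi i, if_pos hx]

open Matrix in
theorem full_vs_subspace_ista_model
    (n : ℕ) (A : Matrix (Fin n) (Fin n) ℝ) (b : Fin n → ℝ)
    (τ α : ℝ) (hτ : 0 ≤ τ) (hα : 0 < α)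
    (x : Fin n → ℝ)
    (f : (Fin n → ℝ) → ℝ) (hf : ∀ y, f y = 1 / 2 * (y ⬝ᵥ A.mulVec y) - b ⬝ᵥ y)
    (g : Fin n → ℝ) (hg : g = A.mulVec x - b)
    (omega psi : Fin n → ℝ)
    (homega : ∀ i, omega i =
      if x i ≠ 0 then 0
      else if |g i| ≤ τ then 0
      else g i - τ * Real.sign (g i))
    (hpsi : ∀ i, psi i =
      if x i = 0 then 0
      else 1 / α * (x i - max (|x i - α * g i| - α * τ) 0 * Real.sign (x i - α * g i)))
    (m : (Fin n → ℝ) → ℝ)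
    (hm : ∀ y, m y = f x + (y - x) ⬝ᵥ g
        + 1 / (2 * α) * ((y - x) ⬝ᵥ (y - x)) + τ * ∑ i, |y i|) :
    m (x - α • omega - α • psi) = m (x - α • psi) - α / 2 * (omega ⬝ᵥ omega) :=
  full_vs_subspace_ista_model_general n τ α hα x f g omega psi homega hpsi m hm
end

section
/- Componentwise comparison of proximal steps: for any j with x_j ≠ 0, the ISTA displacement ψ_j(x) and the unconstrained smooth displacement φ_j(x) = g_j(x) + τ sign(x_j) satisfy |ψ_j(x)| ≤ |φ_j(x)|; consequently ||ψ(x)|| ≤ ||φ(x)||. -/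
/-!
Writing `G = α g_j` and `t = α τ`, the ISTA step `α ψ_j = x_j - S_t(x_j - G)` (with `S_t` the soft
threshold) is the projection of `x_j` onto the interval `[G - t, G + t]`, while `α φ_j = G ± t` is
the endpoint of that interval on the side of the sign of `x_j`. Projecting a positive number onto
`[a, b]` never gives something larger in absolute value than `b`, and symmetrically for a negative
number and `a`.
-/

theorem sub_max_abs_sub_mul_sign_eq_clamp (z t : ℝ) (ht : 0 ≤ t) :
    z - max (|z| - t) 0 * Real.sign z = max (-t) (min z t) := by
  rcases lt_trichotomy z 0 with hz | rfl | hz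
  · rw [Real.sign_of_neg hz, abs_of_neg hz, min_eq_left (by linarith)]
    rcases le_total (-z - t) 0 with h | h
    · rw [max_eq_right h, max_eq_right (by linarith)]; ring
    · rw [max_eq_left h, max_eq_left (by linarith)]; ring
  · simp [ht]
  · rw [Real.sign_of_pos hz, abs_of_pos hz, max_eq_right (le_min (by linarith) (by linarith))]
    rcases le_total (z - t) 0 with h | h
    · rw [max_eq_right h, min_eq_left (by linarith)]; ring
    · rw [max_eq_left h, min_eq_right (by linarith)]; ring

theorem sub_softThreshold_eq_clamp (x G t : ℝ) (ht : 0 ≤ t) :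
    x - max (|x - G| - t) 0 * Real.sign (x - G) = max (G - t) (min x (G + t)) := by
  calc x - max (|x - G| - t) 0 * Real.sign (x - G)
      = G + (x - G - max (|x - G| - t) 0 * Real.sign (x - G)) := by ring
    _ = G + max (-t) (min (x - G) t) := by rw [sub_max_abs_sub_mul_sign_eq_clamp _ _ ht]
    _ = max (G - t) (min x (G + t)) := by
      rw [← max_add_add_left, ← min_add_add_left, add_sub_cancel, sub_eq_add_neg]

theorem abs_clamp_le_abs_right {a b x : ℝ} (hab : a ≤ b) (hx : 0 < x) :
    |max a (min x b)| ≤ |b| := by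
  rcases le_or_gt 0 b with hb | hb
  · rw [abs_of_nonneg (le_max_of_le_right (le_min hx.le hb)), abs_of_nonneg hb]
    exact max_le hab (min_le_right _ _)
  · rw [min_eq_right (by linarith), max_eq_right hab]

theorem abs_clamp_le_abs_left {a b x : ℝ} (hab : a ≤ b) (hx : x < 0) :
    |max a (min x b)| ≤ |a| := by
  rcases le_or_gt a 0 with ha | ha
  · rw [abs_of_nonpos (max_le ha (min_le_of_left_le hx.le)), abs_of_nonpos ha]
    exact neg_le_neg (le_max_left _ _)
  · rw [min_eq_left (by linarith), max_eq_left (by linarith)]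

theorem abs_sub_softThreshold_le (x G t : ℝ) (ht : 0 ≤ t) (hx : x ≠ 0) :
    |x - max (|x - G| - t) 0 * Real.sign (x - G)| ≤ |G + t * Real.sign x| := by
  have hab : G - t ≤ G + t := by linarith
  rw [sub_softThreshold_eq_clamp x G t ht]
  rcases hx.lt_or_gt with hx | hx
  · rw [Real.sign_of_neg hx, mul_neg_one, ← sub_eq_add_neg]
    exact abs_clamp_le_abs_left hab hx
  · rw [Real.sign_of_pos hx, mul_one]
    exact abs_clamp_le_abs_right hab hx

theorem abs_istaStep_le (x g τ α : ℝ) (hτ : 0 ≤ τ) (hα : 0 < α) (hx : x ≠ 0) :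
    |1 / α * (x - max (|x - α * g| - α * τ) 0 * Real.sign (x - α * g))| ≤
      |g + τ * Real.sign x| := by
  have h := abs_sub_softThreshold_le x (α * g) (α * τ) (by positivity) hx
  rw [show α * g + α * τ * Real.sign x = α * (g + τ * Real.sign x) by ring, abs_mul,
    abs_of_pos hα] at h
  rw [abs_mul, abs_of_pos (by positivity), one_div, inv_mul_le_iff₀ hα]
  exact h

theorem sqrt_dotProduct_self_le_of_abs_le {ι : Type*} [Fintype ι] {u v : ι → ℝ}
    (h : ∀ i, |u i| ≤ |v i|) : √(u ⬝ᵥ u) ≤ √(v ⬝ᵥ v) :=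
  Real.sqrt_le_sqrt <| Finset.sum_le_sum fun i _ => abs_le_iff_mul_self_le.mp (h i)

open Matrix in
theorem psi_le_phi_general
    (n : ℕ)
    (τ α : ℝ) (hτ : 0 ≤ τ) (hα : 0 < α)
    (x : Fin n → ℝ)
    (g : Fin n → ℝ)
    (phi psi : Fin n → ℝ)
    (hphi : ∀ i, phi i =
      if x i = 0 then 0 else g i + τ * Real.sign (x i))
    (hpsi : ∀ i, psi i =
      if x i = 0 then 0
      else 1 / α * (x i - max (|x i - α * g i| - α * τ) 0 * Real.sign (x i - α * g i))) :
    (∀ j, x j ≠ 0 → |psi j| ≤ |phi j|) ∧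
      Real.sqrt (psi ⬝ᵥ psi) ≤ Real.sqrt (phi ⬝ᵥ phi) := by
  have hcomp : ∀ j, |psi j| ≤ |phi j| := by
    intro j
    rw [hphi j, hpsi j]
    split_ifs with hxj
    · rfl
    · exact abs_istaStep_le (x j) (g j) τ α hτ hα hxj
  exact ⟨fun j _ => hcomp j, sqrt_dotProduct_self_le_of_abs_le hcomp⟩

open Matrix in
theorem psi_le_phi
    (n : ℕ) (A : Matrix (Fin n) (Fin n) ℝ) (b : Fin n → ℝ)
    (τ α : ℝ) (hτ : 0 ≤ τ) (hα : 0 < α)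
    (x : Fin n → ℝ)
    (g : Fin n → ℝ) (hg : g = A.mulVec x - b)
    (phi psi : Fin n → ℝ)
    (hphi : ∀ i, phi i =
      if x i = 0 then 0 else g i + τ * Real.sign (x i))
    (hpsi : ∀ i, psi i =
      if x i = 0 then 0
      else 1 / α * (x i - max (|x i - α * g i| - α * τ) 0 * Real.sign (x i - α * g i))) :
    (∀ j, x j ≠ 0 → |psi j| ≤ |phi j|) ∧
      Real.sqrt (psi ⬝ᵥ psi) ≤ Real.sqrt (phi ⬝ᵥ phi) :=
  psi_le_phi_general n τ α hτ hα x g phi psi hphi hpsi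
end

section
/- One-dimensional prox comparison: let m(y) = g(y - z) + (1/(2α))(y - z)² + τ|y| and m̄(y) = g(y - z) + (1/(2α))(y - z)² + τ σ y, where σ = sign(z) and z ≠ 0. Let p = argmin m and q = argmin m̄. Then |p - z| ≤ |q - z|. -/
/-!
The minimiser `q` of the smooth function `m̄` is a critical point:
`g + (q - z) / α + τ σ = 0`. At the minimiser `p` of `m`, minus the gradient of the smooth part,
`s = -(g + (p - z) / α)`, is a subgradient of `τ |·|`; and `τ σ` is a subgradient of `τ |·|`
at `z`. Monotonicity of the subdifferential gives `(s - τ σ) (p - z) ≥ 0`, which unfolds to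
`(p - q) (p - z) ≤ 0`, hence `|p - z| ≤ |q - z|`.
-/

open Set Filter Topology

def HasSubgradientAt (φ : ℝ → ℝ) (s x : ℝ) : Prop :=
  ∀ y, φ x + s * (y - x) ≤ φ y

theorem HasSubgradientAt.sub_mul_sub_nonneg {φ : ℝ → ℝ} {s t x y : ℝ}
    (hs : HasSubgradientAt φ s x) (ht : HasSubgradientAt φ t y) : 0 ≤ (s - t) * (x - y) := by
  nlinarith [hs y, ht x]

theorem hasSubgradientAt_const_mul_abs_sign {τ : ℝ} (hτ : 0 ≤ τ) (z : ℝ) :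
    HasSubgradientAt (fun y => τ * |y|) (τ * Real.sign z) z := by
  intro y
  show τ * |z| + τ * Real.sign z * (y - z) ≤ τ * |y|
  rcases lt_trichotomy z 0 with hz | rfl | hz
  · rw [Real.sign_of_neg hz, abs_of_neg hz]
    nlinarith [neg_abs_le y]
  · simp only [abs_zero, Real.sign_zero, mul_zero, zero_mul, add_zero]
    positivity
  · rw [Real.sign_of_pos hz, abs_of_pos hz]
    nlinarith [le_abs_self y]

theorem IsMinOn.hasSubgradientAt_neg_of_add {f φ : ℝ → ℝ} {A p : ℝ}
    (hmin : IsMinOn (fun y => f y + φ y) univ p) (hf : HasDerivAt f A p)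
    (hφ : ConvexOn ℝ univ φ) : HasSubgradientAt φ (-A) p := by
  intro y
  have hline : HasDerivAt (fun t => f (p + t * (y - p))) (A * (y - p)) 0 := by
    have h : HasDerivAt (fun t : ℝ => p + t * (y - p)) (y - p) 0 := by
      simpa using ((hasDerivAt_id (0 : ℝ)).mul_const (y - p)).const_add p
    exact (by simpa using hf : HasDerivAt f A (p + 0 * (y - p))).comp 0 h
  -- Convexity of `φ` on the segment `[p, y]` and minimality of `p` give
  -- `t (φ p - φ y) ≤ f (p + t (y - p)) - f p`.
  have hslope : ∀ t ∈ Ioo (0 : ℝ) 1,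
      φ p - φ y ≤ t⁻¹ • (f (p + (0 + t) * (y - p)) - f (p + 0 * (y - p))) := by
    rintro t ⟨ht0, ht1⟩
    have hconv := hφ.2 (mem_univ p) (mem_univ y) (by linarith : 0 ≤ 1 - t) ht0.le (by ring)
    have hmin' := isMinOn_univ_iff.1 hmin (p + t * (y - p))
    rw [smul_eq_mul, le_inv_mul_iff₀ ht0]
    simp only [smul_eq_mul] at hconv
    rw [show (1 - t) * p + t * y = p + t * (y - p) by ring] at hconv
    simp only [zero_add, zero_mul, add_zero]
    nlinarith
  have hlim : φ p - φ y ≤ A * (y - p) :=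
    ge_of_tendsto hline.tendsto_slope_zero_right (mem_of_superset (Ioo_mem_nhdsGT one_pos) hslope)
  linarith

theorem hasDerivAt_mul_sub_add_mul_sub_sq (g c z y : ℝ) :
    HasDerivAt (fun y => g * (y - z) + c * (y - z) ^ 2) (g + 2 * c * (y - z)) y := by
  have h : HasDerivAt (fun y => y - z) 1 y := (hasDerivAt_id' y).sub_const z
  exact ((h.const_mul g).add ((h.pow 2).const_mul c)).congr_deriv (by ring)

theorem abs_le_abs_of_sub_mul_nonpos {a b : ℝ} (h : (a - b) * a ≤ 0) : |a| ≤ |b| := by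
  nlinarith [abs_mul_abs_self a, abs_nonneg a, abs_nonneg b, abs_mul a b, le_abs_self (a * b)]

theorem one_dim_prox_comparison_general
    (z g α τ : ℝ) (hα : 0 < α) (hτ : 0 ≤ τ)
    (p q : ℝ)
    (hp : ∀ y : ℝ, g * (p - z) + 1 / (2 * α) * (p - z) ^ 2 + τ * |p|
        ≤ g * (y - z) + 1 / (2 * α) * (y - z) ^ 2 + τ * |y|)
    (hq : ∀ y : ℝ, g * (q - z) + 1 / (2 * α) * (q - z) ^ 2 + τ * (Real.sign z * q)
        ≤ g * (y - z) + 1 / (2 * α) * (y - z) ^ 2 + τ * (Real.sign z * y)) :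
    |p - z| ≤ |q - z| := by
  have hf := hasDerivAt_mul_sub_add_mul_sub_sq g (1 / (2 * α)) z
  have hlin : HasDerivAt (fun y => τ * (Real.sign z * y)) (τ * Real.sign z) q :=
    (((hasDerivAt_id' q).const_mul _).const_mul τ).congr_deriv (by ring)
  have hq_crit : g + 2 * (1 / (2 * α)) * (q - z) + τ * Real.sign z = 0 :=
    ((isMinOn_univ_iff.2 hq).isLocalMin univ_mem).hasDerivAt_eq_zero ((hf q).add hlin)
  have hconv : ConvexOn ℝ univ (fun y : ℝ => τ * |y|) := (convexOn_norm convex_univ).smul hτ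
  have hp_sub := (isMinOn_univ_iff.2 hp).hasSubgradientAt_neg_of_add (hf p) hconv
  have hmono := hp_sub.sub_mul_sub_nonneg (hasSubgradientAt_const_mul_abs_sign hτ z)
  apply abs_le_abs_of_sub_mul_nonpos
  have hscaled : 2 * (1 / (2 * α)) * ((p - z - (q - z)) * (p - z)) ≤ 0 := by
    linear_combination hmono - (p - z) * hq_crit
  exact nonpos_of_mul_nonpos_right hscaled (by positivity)

theorem one_dim_prox_comparison
    (z g α τ : ℝ) (hz : z ≠ 0) (hα : 0 < α) (hτ : 0 ≤ τ)
    (p q : ℝ)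
    (hp : ∀ y : ℝ, g * (p - z) + 1 / (2 * α) * (p - z) ^ 2 + τ * |p|
        ≤ g * (y - z) + 1 / (2 * α) * (y - z) ^ 2 + τ * |y|)
    (hq : ∀ y : ℝ, g * (q - z) + 1 / (2 * α) * (q - z) ^ 2 + τ * (Real.sign z * q)
        ≤ g * (y - z) + 1 / (2 * α) * (y - z) ^ 2 + τ * (Real.sign z * y)) :
    |p - z| ≤ |q - z| :=
  one_dim_prox_comparison_general z g α τ hα hτ p q hp hq
end

section
/- Finite active-set identification for ISTA: suppose x* minimizes F(x) = (1/2)xᵀAx - bᵀx + τ||x||₁ and satisfies strict complementarity (x*_i = 0 implies |g_i(x*)| < τ, where g(x) = Ax - b). If x is close enough to x* — specifically |x_i| < (αδ₂)/2 and |g_i(x)| < τ - δ₂ for all i with x*_i = 0, where δ₂ = min_{i: x*_i = 0} (τ - |g_i(x*)|)/2 — then the ISTA step sets the i-th coordinate to zero for every i with x*_i = 0: max(|x_i - α g_i(x)| - ατ, 0) = 0. -/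
theorem abs_sub_mul_lt_mul_of_abs_lt {u g α τ δ : ℝ} (hα : 0 < α)
    (hu : |u| < α * δ / 2) (hg : |g| < τ - δ) : |u - α * g| < α * τ := by
  have hδ : 0 < δ := by
    have : 0 < α * δ := by linarith [abs_nonneg u]
    exact pos_of_mul_pos_right this hα.le
  calc |u - α * g| ≤ |u| + α * |g| := by
        simpa only [abs_mul, abs_of_pos hα] using abs_sub u (α * g)
    _ < α * δ / 2 + α * (τ - δ) := by gcongr
    _ ≤ α * τ := by nlinarith

open Matrix in
theorem ista_active_set_identification_general
    (n : ℕ) (A : Matrix (Fin n) (Fin n) ℝ)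
    (b : Fin n → ℝ) (τ : ℝ) (α : ℝ) (hα : 0 < α)
    (xstar : Fin n → ℝ) (δ₂ : ℝ) (x : Fin n → ℝ)
    (hclose1 : ∀ i, xstar i = 0 → |x i| < α * δ₂ / 2)
    (hclose2 : ∀ i, xstar i = 0 → |(A.mulVec x - b) i| < τ - δ₂) :
    ∀ i, xstar i = 0 → max (|x i - α * (A.mulVec x - b) i| - α * τ) 0 = 0 := by
  intro i hi
  have hstep := abs_sub_mul_lt_mul_of_abs_lt hα (hclose1 i hi) (hclose2 i hi)
  exact max_eq_right (sub_nonpos.mpr hstep.le)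

open Matrix in
theorem ista_active_set_identification
    (n : ℕ) (A : Matrix (Fin n) (Fin n) ℝ) (hA : A.IsSymm)
    (hApos : ∀ y : Fin n → ℝ, y ≠ 0 → 0 < y ⬝ᵥ A.mulVec y)
    (b : Fin n → ℝ) (τ : ℝ) (hτ : 0 < τ) (α : ℝ) (hα : 0 < α)
    (F : (Fin n → ℝ) → ℝ)
    (hF : ∀ y, F y = 1 / 2 * (y ⬝ᵥ A.mulVec y) - b ⬝ᵥ y + τ * ∑ i, |y i|)
    (xstar : Fin n → ℝ) (hxstar : ∀ y, F xstar ≤ F y)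
    (hstrict : ∀ i, xstar i = 0 → |(A.mulVec xstar - b) i| < τ)
    (δ₂ : ℝ) (hδ₂pos : 0 < δ₂)
    (hδ₂ : ∀ i, xstar i = 0 → δ₂ ≤ (τ - |(A.mulVec xstar - b) i|) / 2)
    (x : Fin n → ℝ)
    (hclose1 : ∀ i, xstar i = 0 → |x i| < α * δ₂ / 2)
    (hclose2 : ∀ i, xstar i = 0 → |(A.mulVec x - b) i| < τ - δ₂) :
    ∀ i, xstar i = 0 → max (|x i - α * (A.mulVec x - b) i| - α * τ) 0 = 0 :=
  ista_active_set_identification_general n A b τ α hα xstar δ₂ x hclose1 hclose2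
end
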